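/- arXiv:2208.12947 — 2 statements merged into one kernel-verified Lean document; each statement's English description precedes it below -/
import Mathlib

section
/- Let q > 0. If m and n are loops for q, then the composition mn is a loop for q and its weight is multiplicative: w_q(mn) = w_q(m) · w_q(n). -/
noncomputable def cfRev (q : ℝ) : List ℤ → ℝ
  | [] => 0
  | [a] => (a : ℝ)
  | a :: b :: rest => (a : ℝ) + 1 / (q * cfRev q (b :: rest))

/-- `cf q [m₀, …, m_k]` is the continued fraction `m_k + 1/(q m_{k-1} + q/( … + q/(q m₀)))`. -/
noncomputable def cf (q : ℝ) (l : List ℤ) : ℝ := cfRev q l.reverse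

/-- `l` is a path for `q`: all denominators nonzero, i.e. every proper nonempty prefix
has nonzero continued-fraction value. -/
def IsPath (q : ℝ) (l : List ℤ) : Prop :=
  l ≠ [] ∧ ∀ t : List ℤ, t ≠ [] → t <+: l → t.length < l.length → cf q t ≠ 0

/-- all entries except possibly the last are nonzero -/
def IsProper (l : List ℤ) : Prop := ∀ i, i + 1 < l.length → l.getD i 0 ≠ 0

def IsLoop (q : ℝ) (l : List ℤ) : Prop := IsPath q l ∧ cf q l = 0

/-- the weight `q^{k/2} ∏_{j<k} |c(q, m_j)|`. -/
noncomputable def weight (q : ℝ) (l : List ℤ) : ℝ :=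
  Real.sqrt (q ^ (l.length - 1)) * ∏ j ∈ Finset.range (l.length - 1), |cf q (l.take (j + 1))|

/-- composition of paths -/
def comp (m n : List ℤ) : List ℤ := m.dropLast ++ (m.getLastD 0 + n.headD 0) :: n.tail

/-- one step of zero-skipping -/
def SkipStep (l l' : List ℤ) : Prop :=
  ∃ (u v : List ℤ) (x y : ℤ), l = u ++ x :: 0 :: y :: v ∧ l' = u ++ (x + y) :: v

/-- the weight `w_q` is unique -/
def WeightUnique (q : ℝ) : Prop :=
  ∀ m n : List ℤ, IsPath q m → IsProper m → IsPath q n → IsProper n →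
    cf q m = cf q n → weight q m = weight q n


/-! Write `m = d ++ [x]` and `n = y :: t`, so that `mn = d ++ (x + y) :: t`. Since the continued
fraction is built from its last entry, `c(q, d ++ [x + y]) = c(q, m) + y = y = c(q, [y])`, and
appending the same entries to two lists with equal values keeps the values equal. Hence the
prefixes of `mn` up to length `|d|` are those of `m`, the longer ones have the values of the
prefixes of `n`, and both the loop property and the product defining the weight split accordingly;
the factor `q^{k/2}` splits because `q > 0`. -/

lemma isPath_iff_cf_take_ne_zero {q : ℝ} {l : List ℤ} :
    IsPath q l ↔ l ≠ [] ∧ ∀ k, 0 < k → k < l.length → cf q (l.take k) ≠ 0 := by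
  refine and_congr_right fun _ => ⟨fun h k hk hkl => ?_, fun h s hs hsl hlen => ?_⟩
  · refine h _ ?_ (List.take_prefix k l) (by simp [hkl])
    simp [List.take_eq_nil_iff, hk.ne', List.ne_nil_of_length_pos (hk.trans hkl)]
  · rw [List.prefix_iff_eq_take.mp hsl]
    exact h _ (List.length_pos_iff.mpr hs) hlen

lemma cf_singleton (q : ℝ) (a : ℤ) : cf q [a] = a := rfl

lemma cf_append_singleton (q : ℝ) {l : List ℤ} (hl : l ≠ []) (a : ℤ) :
    cf q (l ++ [a]) = a + 1 / (q * cf q l) := by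
  obtain ⟨b, r, hbr⟩ := List.exists_cons_of_ne_nil (l := l.reverse) (by simpa using hl)
  simp only [cf, List.reverse_append, List.reverse_singleton, List.singleton_append, hbr, cfRev]

lemma cf_append_singleton_add (q : ℝ) (l : List ℤ) (a b : ℤ) :
    cf q (l ++ [a + b]) = cf q (l ++ [a]) + b := by
  rcases eq_or_ne l [] with rfl | hl
  · simp [cf_singleton]
  · rw [cf_append_singleton q hl, cf_append_singleton q hl]
    push_cast
    ring

lemma cf_append_eq_of_cf_eq (q : ℝ) {l₁ l₂ : List ℤ} (h₁ : l₁ ≠ []) (h₂ : l₂ ≠ [])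
    (h : cf q l₁ = cf q l₂) (s : List ℤ) : cf q (l₁ ++ s) = cf q (l₂ ++ s) := by
  induction s using List.reverseRecOn with
  | nil => simpa using h
  | append_singleton s a ih =>
    rw [← List.append_assoc, ← List.append_assoc, cf_append_singleton q (by simp [h₁]),
      cf_append_singleton q (by simp [h₂]), ih]

lemma comp_append_singleton_cons (d t : List ℤ) (x y : ℤ) :
    comp (d ++ [x]) (y :: t) = d ++ (x + y) :: t := by
  simp [comp]

section Composition

variable {q : ℝ} {d t : List ℤ} {x y : ℤ}

lemma cf_append_add_cons (hm : cf q (d ++ [x]) = 0) (y : ℤ) (t : List ℤ) :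
    cf q (d ++ (x + y) :: t) = cf q (y :: t) := by
  have hlast : cf q (d ++ [x + y]) = cf q [y] := by
    rw [cf_append_singleton_add, hm, cf_singleton, zero_add]
  simpa using cf_append_eq_of_cf_eq q (by simp) (by simp) hlast t

lemma take_append_add_cons_of_le {k : ℕ} (hk : k ≤ d.length) :
    (d ++ (x + y) :: t).take k = (d ++ [x]).take k := by
  rw [List.take_append_of_le_length hk, List.take_append_of_le_length hk]

lemma cf_take_append_add_cons (hm : cf q (d ++ [x]) = 0) (j : ℕ) :
    cf q ((d ++ (x + y) :: t).take (d.length + 1 + j)) = cf q ((y :: t).take (j + 1)) := by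
  rw [List.take_succ_cons, ← cf_append_add_cons hm, add_assoc, List.take_length_add_append,
    add_comm, List.take_succ_cons]

lemma isLoop_append_add_cons (hm : IsLoop q (d ++ [x])) (hn : IsLoop q (y :: t)) :
    IsLoop q (d ++ (x + y) :: t) := by
  refine ⟨isPath_iff_cf_take_ne_zero.mpr ⟨by simp, fun k hk hkl => ?_⟩,
    (cf_append_add_cons hm.2 y t).trans hn.2⟩
  obtain ⟨-, hm_take⟩ := isPath_iff_cf_take_ne_zero.mp hm.1
  obtain ⟨-, hn_take⟩ := isPath_iff_cf_take_ne_zero.mp hn.1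
  simp only [List.length_append, List.length_cons, List.length_nil] at hkl hm_take hn_take
  rcases le_or_gt k d.length with hle | hgt
  · rw [take_append_add_cons_of_le hle]
    exact hm_take k hk (by omega)
  · obtain ⟨j, rfl⟩ : ∃ j, k = d.length + 1 + j := ⟨k - (d.length + 1), by omega⟩
    rw [cf_take_append_add_cons hm.2]
    exact hn_take (j + 1) j.succ_pos (by omega)

lemma weight_append_add_cons (hq : 0 ≤ q) (hm : cf q (d ++ [x]) = 0) :
    weight q (d ++ (x + y) :: t) = weight q (d ++ [x]) * weight q (y :: t) := by
  have hlow : ∀ j ∈ Finset.range d.length,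
      |cf q ((d ++ (x + y) :: t).take (j + 1))| = |cf q ((d ++ [x]).take (j + 1))| :=
    fun j hj => by rw [take_append_add_cons_of_le (Finset.mem_range.mp hj)]
  have hhigh : ∀ j ∈ Finset.range t.length,
      |cf q ((d ++ (x + y) :: t).take (d.length + j + 1))| = |cf q ((y :: t).take (j + 1))| :=
    fun j _ => by rw [add_right_comm, cf_take_append_add_cons hm]
  have hlen : (d ++ (x + y) :: t).length - 1 = d.length + t.length := by simp
  have hlen_m : (d ++ [x]).length - 1 = d.length := by simp
  have hlen_n : (y :: t).length - 1 = t.length := by simp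
  rw [weight, weight, weight, hlen, hlen_m, hlen_n, pow_add, Real.sqrt_mul (pow_nonneg hq _),
    Finset.prod_range_add, Finset.prod_congr rfl hlow, Finset.prod_congr rfl hhigh]
  ring

end Composition

theorem stmt3 (q : ℝ) (hq : 0 < q) (m n : List ℤ) (hm : IsLoop q m) (hn : IsLoop q n) :
    IsLoop q (comp m n) ∧ weight q (comp m n) = weight q m * weight q n := by
  obtain ⟨d, x, rfl⟩ : ∃ d x, m = d ++ [x] :=
    ⟨m.dropLast, m.getLast hm.1.1, (List.dropLast_append_getLast hm.1.1).symm⟩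
  obtain ⟨y, t, rfl⟩ : ∃ y t, n = y :: t := ⟨n.head hn.1.1, n.tail, (List.cons_head_tail hn.1.1).symm⟩
  rw [comp_append_singleton_cons]
  exact ⟨isLoop_append_add_cons hm hn, weight_append_add_cons hq.le hm.2⟩
end

section
/- If q > 0 is transcendental, then every real number a can be represented as a = c(q,m) with a proper path m in at most one way. In particular, for transcendental q the weight w_q is unique. -/
open RatFunc WithZero

/-! Since `q` is transcendental, `X ↦ q` is a field embedding `ℚ(X) → ℝ`, and it carries the
continued fraction `cfRevX` with `X` in place of `q` to `cfRev q`. So it suffices to show that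
`cfRevX` is injective on reversed proper paths. For the valuation at infinity, a continued fraction
`n₀ + 1/(X (n₁ + 1/(X (…))))` with nonzero integer entries is a unit, so its tail `1/(X (…))` has
valuation `< 1`. The leading entry is thus the unique integer within valuation `< 1` of the value,
and the remaining entries follow by induction. -/

-- At `t = []` this uses `1 / (q * 0) = 0`.
lemma cfRev_cons (q : ℝ) (a : ℤ) (t : List ℤ) : cfRev q (a :: t) = a + 1 / (q * cfRev q t) := by
  cases t <;> simp [cfRev]

section InftyValuation

variable {K : Type*} [Field K]

-- `cfRevX K [a] = a` because `1 / (X * 0) = 0`.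
variable (K) in
noncomputable def cfRevX : List ℤ → RatFunc K
  | [] => 0
  | a :: t => (a : RatFunc K) + 1 / (X * cfRevX t)

variable [DecidableEq (RatFunc K)]

local notation "v" => inftyValuation K

lemma inftyValuation_intCast [CharZero K] {n : ℤ} (hn : n ≠ 0) : v (n : RatFunc K) = 1 := by
  rw [← map_intCast (C (K := K)) n]
  exact inftyValuation.C K (Int.cast_ne_zero.mpr hn)

lemma inftyValuation_one_div_X_mul_lt_one {f : RatFunc K} (hf : v f = 1) :
    v (1 / (X * f)) < 1 := by
  rw [one_div, map_inv₀, map_mul, inftyValuation.X, hf, mul_one, ← exp_neg, ← exp_zero, exp_lt_exp]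
  norm_num

lemma inftyValuation_intCast_add [CharZero K] {n : ℤ} (hn : n ≠ 0) {ε : RatFunc K} (hε : v ε < 1) :
    v (n + ε) = 1 := by
  rw [Valuation.map_add_eq_of_lt_left _ (by rwa [inftyValuation_intCast hn]),
    inftyValuation_intCast hn]

lemma eq_of_intCast_add_eq [CharZero K] {a b : ℤ} {ε δ : RatFunc K} (hε : v ε < 1) (hδ : v δ < 1)
    (h : a + ε = b + δ) : a = b := by
  by_contra hab
  have hsub : ((a - b : ℤ) : RatFunc K) = δ - ε := by push_cast; linear_combination h
  have := inftyValuation_intCast (K := K) (sub_ne_zero.mpr hab)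
  rw [hsub] at this
  exact (lt_of_le_of_lt (Valuation.map_sub _ _ _) (max_lt hδ hε)).ne this

lemma inftyValuation_one_div_X_mul_cfRevX_lt_one [CharZero K] {t : List ℤ} (ht : ∀ x ∈ t, x ≠ 0) :
    v (1 / (X * cfRevX K t)) < 1 := by
  induction t with
  | nil => simp [cfRevX]
  | cons a s ih =>
    exact inftyValuation_one_div_X_mul_lt_one <| inftyValuation_intCast_add
      (ht a List.mem_cons_self) (ih fun x hx => ht x (List.mem_cons_of_mem a hx))

end InftyValuation

section Injectivity

variable {K : Type*} [Field K] [CharZero K]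

lemma cfRevX_ne_zero {t : List ℤ} (ht : ∀ x ∈ t, x ≠ 0) (ht₀ : t ≠ []) : cfRevX K t ≠ 0 := by
  classical
  obtain ⟨a, s, rfl⟩ := List.exists_cons_of_ne_nil ht₀
  intro h
  have := inftyValuation_intCast_add (K := K) (ht a List.mem_cons_self)
    (inftyValuation_one_div_X_mul_cfRevX_lt_one fun x hx => ht x (List.mem_cons_of_mem a hx))
  rw [← cfRevX, h, map_zero] at this
  exact zero_ne_one this

lemma eq_and_cfRevX_eq_of_cfRevX_cons_eq {a b : ℤ} {s t : List ℤ} (hs : ∀ x ∈ s, x ≠ 0)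
    (ht : ∀ x ∈ t, x ≠ 0) (h : cfRevX K (a :: s) = cfRevX K (b :: t)) :
    a = b ∧ cfRevX K s = cfRevX K t := by
  classical
  obtain rfl := eq_of_intCast_add_eq (inftyValuation_one_div_X_mul_cfRevX_lt_one hs)
    (inftyValuation_one_div_X_mul_cfRevX_lt_one ht) h
  have h' := add_left_cancel h
  rw [one_div, one_div, inv_inj] at h'
  exact ⟨rfl, mul_left_cancel₀ X_ne_zero h'⟩

lemma eq_of_cfRevX_eq {s t : List ℤ} (hs : ∀ x ∈ s, x ≠ 0) (ht : ∀ x ∈ t, x ≠ 0)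
    (h : cfRevX K s = cfRevX K t) : s = t := by
  induction s generalizing t with
  | nil =>
    cases t with
    | nil => rfl
    | cons b t => exact (cfRevX_ne_zero ht (List.cons_ne_nil b t) h.symm).elim
  | cons a s ih =>
    cases t with
    | nil => exact (cfRevX_ne_zero hs (List.cons_ne_nil a s) h).elim
    | cons b t =>
      have hs' := fun x hx => hs x (List.mem_cons_of_mem a hx)
      have ht' := fun x hx => ht x (List.mem_cons_of_mem b hx)
      obtain ⟨rfl, h'⟩ := eq_and_cfRevX_eq_of_cfRevX_cons_eq hs' ht' h
      rw [ih hs' ht' h']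

lemma cons_eq_cons_of_cfRevX_eq {a b : ℤ} {s t : List ℤ} (hs : ∀ x ∈ s, x ≠ 0)
    (ht : ∀ x ∈ t, x ≠ 0) (h : cfRevX K (a :: s) = cfRevX K (b :: t)) : a :: s = b :: t := by
  obtain ⟨rfl, h'⟩ := eq_and_cfRevX_eq_of_cfRevX_cons_eq hs ht h
  rw [eq_of_cfRevX_eq hs ht h']

end Injectivity

lemma IsProper.ne_zero_of_mem {l : List ℤ} {a x : ℤ} (h : IsProper (l ++ [a])) (hx : x ∈ l) :
    x ≠ 0 := by
  obtain ⟨i, hi, rfl⟩ := List.getElem_of_mem hx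
  have := h i (by simp; omega)
  rwa [List.getD_append _ _ _ _ hi, List.getD_eq_getElem _ _ hi] at this

noncomputable def ratFuncEval (q : ℝ) (htr : Transcendental ℚ q) : RatFunc ℚ →+* ℝ :=
  IsFractionRing.lift (transcendental_iff_injective.mp htr)

lemma ratFuncEval_X (q : ℝ) (htr : Transcendental ℚ q) : ratFuncEval q htr X = q := by
  rw [ratFuncEval, ← algebraMap_X, IsFractionRing.lift_algebraMap]
  simp

lemma ratFuncEval_cfRevX (q : ℝ) (htr : Transcendental ℚ q) (l : List ℤ) :
    ratFuncEval q htr (cfRevX ℚ l) = cfRev q l := by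
  induction l with
  | nil => simp [cfRevX, cfRev]
  | cons a t ih =>
    rw [cfRevX, cfRev_cons, map_add, map_intCast, map_div₀, map_one, map_mul, ratFuncEval_X, ih]

lemma eq_of_cf_eq {q : ℝ} (htr : Transcendental ℚ q) {m n : List ℤ} (hm : m ≠ []) (hn : n ≠ [])
    (hpm : IsProper m) (hpn : IsProper n) (h : cf q m = cf q n) : m = n := by
  obtain ⟨m, a, rfl⟩ := (List.eq_nil_or_concat' m).resolve_left hm
  obtain ⟨n, b, rfl⟩ := (List.eq_nil_or_concat' n).resolve_left hn
  have hX : cfRevX ℚ (a :: m.reverse) = cfRevX ℚ (b :: n.reverse) :=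
    (ratFuncEval q htr).injective (by simpa [cf, ratFuncEval_cfRevX] using h)
  simpa [and_comm] using cons_eq_cons_of_cfRevX_eq
    (fun x hx => hpm.ne_zero_of_mem (List.mem_reverse.mp hx))
    (fun x hx => hpn.ne_zero_of_mem (List.mem_reverse.mp hx)) hX

theorem stmt14_general (q : ℝ) (htr : Transcendental ℚ q) :
    (∀ m n : List ℤ, IsPath q m → IsProper m → IsPath q n → IsProper n →
      cf q m = cf q n → m = n) ∧ WeightUnique q :=
  ⟨fun _ _ hm hpm hn hpn h => eq_of_cf_eq htr hm.1 hn.1 hpm hpn h,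
    fun _ _ hm hpm hn hpn h => congrArg (weight q) (eq_of_cf_eq htr hm.1 hn.1 hpm hpn h)⟩

theorem stmt14 (q : ℝ) (hq : 0 < q) (htr : Transcendental ℚ q) :
    (∀ m n : List ℤ, IsPath q m → IsProper m → IsPath q n → IsProper n →
      cf q m = cf q n → m = n) ∧ WeightUnique q :=
  stmt14_general q htr
end
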